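/- Let γ ∈ (−1, 1), γ ≠ 0, and Φ(ζ) = lim_{R→∞} ∫_{−R}^{R} |s|^γ/(s − ζ) ds for Im ζ ≠ 0. Then Φ is injective on ℂ \ ℝ: there is a nonzero constant C with Φ(ζ) = C·Δ(ζ) on the upper half-plane (Δ the principal branch of z^γ), and Φ is odd, and these facts together imply injectivity. -/

import Mathlib

open MeasureTheory Complex

/-- The absolutely convergent form
`Φ(ζ) = ∫₀^∞ 2ζ s^γ/((s-ζ)(s+ζ)) ds` of the principal-value integral
`lim_{R→∞} ∫_{-R}^R |s|^γ/(s-ζ) ds`. -/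
noncomputable def Phi2 (γ : ℝ) (ζ : ℂ) : ℂ :=
  ∫ s in Set.Ioi (0:ℝ), 2 * ζ * ((s ^ γ : ℝ) : ℂ) / (((s : ℂ) - ζ) * ((s : ℂ) + ζ))

open Set Filter Metric Topology
open scoped Real

/-! On the upper half-plane `Φ = Phi2 γ` is holomorphic (differentiate under the integral sign:
the integrand and its `ζ`-derivative are locally uniformly dominated by a multiple of
`t^γ/(1+t)^2`) and homogeneous of degree `γ` (substitute `s = c t`). Euler's relation
`z Φ'(z) = γ Φ(z)` makes `Φ(z) z^(-γ)` locally constant, hence `Φ = C z^γ`, and `C ≠ 0` because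
`Im Φ(i) > 0`. Since `|γ| < 1`, `z ↦ z^γ` is injective on the upper half-plane and `Im z^γ` has
the sign of `γ` there; by oddness of `Φ` its values on the two half-planes cannot collide. -/

namespace Complex

theorem arg_mem_Ioo_of_im_pos {z : ℂ} (hz : 0 < z.im) : arg z ∈ Ioo 0 π := by
  refine ⟨(arg_nonneg_iff.2 hz.le).lt_of_ne fun h => ?_, arg_lt_pi_iff.2 (Or.inr hz.ne')⟩
  exact hz.ne' (arg_eq_zero_iff.1 h.symm).2

theorem abs_arg_mul_lt_pi_of_im_pos {γ : ℝ} (hγ : |γ| ≤ 1) {z : ℂ} (hz : 0 < z.im) :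
    |arg z * γ| < π := by
  obtain ⟨h0, hπ⟩ := arg_mem_Ioo_of_im_pos hz
  rw [abs_mul, abs_of_pos h0]
  nlinarith [abs_nonneg γ]

theorem log_cpow_ofReal_of_im_pos {γ : ℝ} (hγ : |γ| ≤ 1) {z : ℂ} (hz : 0 < z.im) :
    log (z ^ (γ : ℂ)) = log z * γ := by
  have hz0 : z ≠ 0 := fun h => by simp [h] at hz
  have him : (log z * γ).im = arg z * γ := by simp [log_im]
  obtain ⟨hlo, hhi⟩ := abs_lt.1 (abs_arg_mul_lt_pi_of_im_pos hγ hz)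
  rw [cpow_def_of_ne_zero hz0, log_exp] <;> linarith

theorem injOn_cpow_ofReal_of_im_pos {γ : ℝ} (hγ : |γ| ≤ 1) (hγ0 : γ ≠ 0) :
    InjOn (fun z : ℂ => z ^ (γ : ℂ)) {z | 0 < z.im} := by
  intro z hz w hw h
  have hlog : log z * γ = log w * γ := by
    rw [← log_cpow_ofReal_of_im_pos hγ hz, ← log_cpow_ofReal_of_im_pos hγ hw]
    exact congrArg log h
  rw [← exp_log (x := z) (fun h => by simp [h] at hz),
    ← exp_log (x := w) (fun h => by simp [h] at hw), mul_right_cancel₀ (ofReal_ne_zero.2 hγ0) hlog]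

theorem mul_im_cpow_ofReal_pos {γ : ℝ} (hγ : |γ| ≤ 1) (hγ0 : γ ≠ 0) {z : ℂ} (hz : 0 < z.im) :
    0 < γ * (z ^ (γ : ℂ)).im := by
  have hnorm : 0 < ‖z‖ ^ γ := Real.rpow_pos_of_pos (norm_pos_iff.2 fun h => by simp [h] at hz) γ
  obtain ⟨hlo, hhi⟩ := abs_lt.1 (abs_arg_mul_lt_pi_of_im_pos hγ hz)
  have harg := (arg_mem_Ioo_of_im_pos hz).1
  rw [cpow_ofReal_im, mul_left_comm]
  refine mul_pos hnorm ?_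
  rcases hγ0.lt_or_gt with hneg | hpos
  · exact mul_pos_of_neg_of_neg hneg
      (Real.sin_neg_of_neg_of_neg_pi_lt (mul_neg_of_pos_of_neg harg hneg) hlo)
  · exact mul_pos hpos (Real.sin_pos_of_pos_of_lt_pi (mul_pos harg hpos) hhi)

theorem cpow_ofReal_ne_neg_cpow_ofReal {γ : ℝ} (hγ : |γ| ≤ 1) (hγ0 : γ ≠ 0) {z w : ℂ}
    (hz : 0 < z.im) (hw : 0 < w.im) : z ^ (γ : ℂ) ≠ -w ^ (γ : ℂ) := by
  intro h
  have hzw := mul_im_cpow_ofReal_pos hγ hγ0 hz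
  rw [h, neg_im, mul_neg] at hzw
  linarith [mul_im_cpow_ofReal_pos hγ hγ0 hw]

end Complex

theorem HasDerivAt.mul_eq_of_homogeneous {F : ℂ → ℂ} {F' z : ℂ} {γ : ℝ}
    (hF : HasDerivAt F F' z) (hhom : ∀ c : ℝ, 0 < c → F (c * z) = (c ^ γ : ℝ) * F z) :
    z * F' = γ * F z := by
  have hlhs : HasDerivAt (fun c : ℝ => F (c * z)) (F' * z) 1 := by
    have := hF.comp_of_eq ((1 : ℝ) : ℂ) ((hasDerivAt_id _).mul_const z) (by simp)
    simpa using this.comp_ofReal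
  have hrhs : HasDerivAt (fun c : ℝ => ((c ^ γ : ℝ) : ℂ) * F z) (γ * F z) 1 := by
    simpa using ((Real.hasDerivAt_rpow_const (Or.inl one_ne_zero)).ofReal_comp).mul_const (F z)
  have heq : (fun c : ℝ => F (c * z)) =ᶠ[𝓝 1] fun c => ((c ^ γ : ℝ) : ℂ) * F z :=
    eventually_of_mem (lt_mem_nhds one_pos) hhom
  rw [mul_comm]
  exact hlhs.unique (hrhs.congr_of_eventuallyEq heq)

theorem IsOpen.mul_cpow_neg_eq_of_homogeneous {F : ℂ → ℂ} {γ : ℝ} {U : Set ℂ} (hUo : IsOpen U)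
    (hUc : IsPreconnected U) (hU : U ⊆ slitPlane) (hF : DifferentiableOn ℂ F U)
    (hhom : ∀ z ∈ U, ∀ c : ℝ, 0 < c → F (c * z) = (c ^ γ : ℝ) * F z) {z w : ℂ}
    (hz : z ∈ U) (hw : w ∈ U) : F z * z ^ (-(γ : ℂ)) = F w * w ^ (-(γ : ℂ)) := by
  have hderiv : ∀ x ∈ U, HasDerivAt (fun u => F u * u ^ (-(γ : ℂ))) 0 x := by
    intro x hx
    have hFx := (hF.differentiableAt (hUo.mem_nhds hx)).hasDerivAt
    have hx0 : x ≠ 0 := slitPlane_ne_zero (hU hx)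
    refine (hFx.mul ((hasDerivAt_id x).cpow_const (hU hx))).congr_deriv ?_
    rw [id, cpow_sub _ _ hx0, cpow_one]
    field_simp
    linear_combination x ^ (-(γ : ℂ)) * hFx.mul_eq_of_homogeneous (hhom x hx)
  exact hUo.is_const_of_deriv_eq_zero hUc
    (fun x hx => (hderiv x hx).differentiableAt.differentiableWithinAt)
    (fun x hx => (hderiv x hx).deriv) hz hw

theorem injOn_im_ne_zero_of_odd {F : ℂ → ℂ} (hodd : ∀ z, F (-z) = -F z)
    (hinj : InjOn F {z | 0 < z.im}) (hsep : ∀ z w, 0 < z.im → 0 < w.im → F z ≠ -F w) :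
    InjOn F {z | z.im ≠ 0} := by
  intro z hz w hw h
  rcases lt_or_gt_of_ne (show z.im ≠ 0 from hz) with hz | hz <;>
    rcases lt_or_gt_of_ne (show w.im ≠ 0 from hw) with hw | hw
  · have hz' : 0 < (-z).im := by simpa using hz
    have hw' : 0 < (-w).im := by simpa using hw
    exact neg_injective (hinj hz' hw' (by rw [hodd, hodd, h]))
  · exact absurd (by rw [hodd, h]) (hsep (-z) w (by simpa using hz) hw)
  · exact absurd (by rw [hodd, neg_neg, h]) (hsep z (-w) hz (by simpa using hw))
  · exact hinj hz hw h

theorem integrableOn_rpow_div_one_add_sq {γ : ℝ} (hγ : γ ∈ Ioo (-1 : ℝ) 1) :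
    IntegrableOn (fun t : ℝ => t ^ γ / (1 + t) ^ 2) (Ioi 0) := by
  have hmeas : AEStronglyMeasurable (fun t : ℝ => t ^ γ / (1 + t) ^ 2) :=
    (by fun_prop : Measurable fun t : ℝ => t ^ γ / (1 + t) ^ 2).aestronglyMeasurable
  rw [← Ioc_union_Ioi_eq_Ioi zero_le_one]
  refine IntegrableOn.union ?_ ?_
  · have hint : IntegrableOn (fun t : ℝ => t ^ γ) (Ioc 0 1) :=
      (intervalIntegrable_iff_integrableOn_Ioc_of_le zero_le_one).1
        (intervalIntegral.intervalIntegrable_rpow' hγ.1)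
    refine hint.mono' hmeas.restrict ?_
    filter_upwards [ae_restrict_mem measurableSet_Ioc] with t ht
    have hpos : 0 < t ^ γ := Real.rpow_pos_of_pos ht.1 γ
    rw [Real.norm_of_nonneg (by positivity)]
    exact div_le_self hpos.le (one_le_pow₀ (by linarith [ht.1]))
  · have hint : IntegrableOn (fun t : ℝ => t ^ (γ - 2)) (Ioi 1) :=
      integrableOn_Ioi_rpow_of_lt (by linarith [hγ.2]) one_pos
    refine hint.mono' hmeas.restrict ?_
    filter_upwards [ae_restrict_mem measurableSet_Ioi] with t (ht : 1 < t)
    have ht0 : 0 < t := one_pos.trans ht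
    rw [Real.norm_of_nonneg (by positivity), Real.rpow_sub ht0, Real.rpow_two]
    exact div_le_div_of_nonneg_left (by positivity) (by positivity) (by nlinarith)

noncomputable def phi2Integrand (γ : ℝ) (ζ : ℂ) (t : ℝ) : ℂ :=
  2 * ζ * ((t ^ γ : ℝ) : ℂ) / (((t : ℂ) - ζ) * ((t : ℂ) + ζ))

-- `∂/∂ζ` of `phi2Integrand`, computed from `2ζ/((t-ζ)(t+ζ)) = 1/(t-ζ) - 1/(t+ζ)`.
noncomputable def phi2IntegrandDeriv (γ : ℝ) (ζ : ℂ) (t : ℝ) : ℂ :=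
  ((t ^ γ : ℝ) : ℂ) * ((((t : ℂ) - ζ) ^ 2)⁻¹ + (((t : ℂ) + ζ) ^ 2)⁻¹)

theorem norm_inv_ofReal_sub_le {ζ : ℂ} {δ M t : ℝ} (hδ : 0 < δ) (hδζ : δ ≤ |ζ.im|)
    (hζM : ‖ζ‖ ≤ M) (ht : 0 ≤ t) : ‖((t : ℂ) - ζ)⁻¹‖ ≤ (1 + M + δ) / δ / (1 + t) := by
  have him : δ ≤ ‖(t : ℂ) - ζ‖ := hδζ.trans (by simpa using abs_im_le_norm ((t : ℂ) - ζ))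
  have hre : t - M ≤ ‖(t : ℂ) - ζ‖ := by
    have := norm_sub_norm_le (t : ℂ) ζ
    rw [norm_real, Real.norm_of_nonneg ht] at this
    linarith
  have hM : 0 ≤ M := (norm_nonneg ζ).trans hζM
  rw [norm_inv, div_div, inv_le_comm₀ (hδ.trans_le him) (by positivity), inv_div,
    div_le_iff₀ (by positivity)]
  nlinarith

theorem norm_inv_ofReal_add_le {ζ : ℂ} {δ M t : ℝ} (hδ : 0 < δ) (hδζ : δ ≤ |ζ.im|)
    (hζM : ‖ζ‖ ≤ M) (ht : 0 ≤ t) : ‖((t : ℂ) + ζ)⁻¹‖ ≤ (1 + M + δ) / δ / (1 + t) := by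
  simpa using norm_inv_ofReal_sub_le (ζ := -ζ) hδ (by simpa using hδζ) (by simpa using hζM) ht

theorem norm_phi2Integrand_le {γ : ℝ} {ζ : ℂ} {δ M t : ℝ} (hδ : 0 < δ) (hδζ : δ ≤ |ζ.im|)
    (hζM : ‖ζ‖ ≤ M) (ht : 0 < t) :
    ‖phi2Integrand γ ζ t‖ ≤ 2 * M * ((1 + M + δ) / δ) ^ 2 * (t ^ γ / (1 + t) ^ 2) := by
  have htγ : 0 ≤ t ^ γ := Real.rpow_nonneg ht.le γ
  have hM : 0 ≤ M := (norm_nonneg ζ).trans hζM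
  calc ‖phi2Integrand γ ζ t‖
      = 2 * ‖ζ‖ * t ^ γ * (‖((t : ℂ) - ζ)⁻¹‖ * ‖((t : ℂ) + ζ)⁻¹‖) := by
        rw [phi2Integrand, div_eq_mul_inv, mul_inv, norm_mul, norm_mul, norm_mul, norm_mul,
          norm_real, Real.norm_of_nonneg htγ]
        norm_num
    _ ≤ 2 * M * t ^ γ * ((1 + M + δ) / δ / (1 + t) * ((1 + M + δ) / δ / (1 + t))) := by
        have := norm_inv_ofReal_sub_le hδ hδζ hζM ht.le
        have := norm_inv_ofReal_add_le hδ hδζ hζM ht.le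
        gcongr
    _ = _ := by field_simp

theorem norm_phi2IntegrandDeriv_le {γ : ℝ} {ζ : ℂ} {δ M t : ℝ} (hδ : 0 < δ)
    (hδζ : δ ≤ |ζ.im|) (hζM : ‖ζ‖ ≤ M) (ht : 0 < t) :
    ‖phi2IntegrandDeriv γ ζ t‖ ≤ 2 * ((1 + M + δ) / δ) ^ 2 * (t ^ γ / (1 + t) ^ 2) := by
  have htγ : 0 ≤ t ^ γ := Real.rpow_nonneg ht.le γ
  calc ‖phi2IntegrandDeriv γ ζ t‖
      ≤ t ^ γ * (‖((t : ℂ) - ζ)⁻¹‖ ^ 2 + ‖((t : ℂ) + ζ)⁻¹‖ ^ 2) := by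
        rw [phi2IntegrandDeriv, norm_mul, norm_real, Real.norm_of_nonneg htγ, ← inv_pow,
          ← inv_pow, ← norm_pow, ← norm_pow]
        gcongr
        exact norm_add_le _ _
    _ ≤ t ^ γ * (((1 + M + δ) / δ / (1 + t)) ^ 2 + ((1 + M + δ) / δ / (1 + t)) ^ 2) := by
        have := norm_inv_ofReal_sub_le hδ hδζ hζM ht.le
        have := norm_inv_ofReal_add_le hδ hδζ hζM ht.le
        gcongr
    _ = _ := by field_simp; ring

theorem measurable_phi2Integrand (γ : ℝ) (ζ : ℂ) : Measurable (phi2Integrand γ ζ) := by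
  unfold phi2Integrand; fun_prop

theorem measurable_phi2IntegrandDeriv (γ : ℝ) (ζ : ℂ) : Measurable (phi2IntegrandDeriv γ ζ) := by
  unfold phi2IntegrandDeriv; fun_prop

theorem hasDerivAt_phi2Integrand (γ : ℝ) {ζ : ℂ} (hζ : ζ.im ≠ 0) (t : ℝ) :
    HasDerivAt (fun w => phi2Integrand γ w t) (phi2IntegrandDeriv γ ζ t) ζ := by
  have hsub : (t : ℂ) - ζ ≠ 0 := fun h => hζ (by simpa using congrArg im h)
  have hadd : (t : ℂ) + ζ ≠ 0 := fun h => hζ (by simpa using congrArg im h)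
  have hnum : HasDerivAt (fun w : ℂ => 2 * w * ((t ^ γ : ℝ) : ℂ)) (2 * ((t ^ γ : ℝ) : ℂ)) ζ := by
    simpa using ((hasDerivAt_id ζ).const_mul 2).mul_const ((t ^ γ : ℝ) : ℂ)
  have hden : HasDerivAt (fun w : ℂ => ((t : ℂ) - w) * ((t : ℂ) + w))
      (-1 * ((t : ℂ) + ζ) + ((t : ℂ) - ζ) * 1) ζ :=
    ((hasDerivAt_id ζ).const_sub (t : ℂ)).mul ((hasDerivAt_id ζ).const_add (t : ℂ))
  refine (hnum.div hden (mul_ne_zero hsub hadd)).congr_deriv ?_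
  rw [phi2IntegrandDeriv]
  field_simp
  ring

theorem integrableOn_phi2Integrand {γ : ℝ} (hγ : γ ∈ Ioo (-1 : ℝ) 1) {ζ : ℂ} (hζ : ζ.im ≠ 0) :
    IntegrableOn (phi2Integrand γ ζ) (Ioi 0) := by
  refine ((integrableOn_rpow_div_one_add_sq hγ).const_mul
    (2 * ‖ζ‖ * ((1 + ‖ζ‖ + |ζ.im|) / |ζ.im|) ^ 2)).mono'
    (measurable_phi2Integrand γ ζ).aestronglyMeasurable ?_
  filter_upwards [ae_restrict_mem measurableSet_Ioi] with t ht
  exact norm_phi2Integrand_le (abs_pos.2 hζ) le_rfl le_rfl ht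

theorem differentiableAt_Phi2 {γ : ℝ} (hγ : γ ∈ Ioo (-1 : ℝ) 1) {z : ℂ} (hz : z.im ≠ 0) :
    DifferentiableAt ℂ (Phi2 γ) z := by
  set ε := |z.im| / 2 with hεdef
  have hε : 0 < ε := by positivity
  have hball : ∀ w ∈ ball z ε, ε ≤ |w.im| ∧ ‖w‖ ≤ ‖z‖ + ε := by
    intro w hw
    rw [mem_ball, dist_eq] at hw
    have him : |(w - z).im| ≤ ‖w - z‖ := abs_im_le_norm _
    rw [sub_im] at him
    have hnorm : ‖w‖ ≤ ‖z‖ + ‖w - z‖ := norm_le_norm_add_norm_sub' w z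
    constructor
    · have := abs_sub_abs_le_abs_sub z.im w.im
      rw [abs_sub_comm] at this
      linarith
    · linarith
  refine (hasDerivAt_integral_of_dominated_loc_of_deriv_le (μ := volume.restrict (Ioi 0))
    (F := phi2Integrand γ) (F' := phi2IntegrandDeriv γ) (ball_mem_nhds z hε)
    (bound := fun t => 2 * ((1 + (‖z‖ + ε) + ε) / ε) ^ 2 * (t ^ γ / (1 + t) ^ 2))
    (Eventually.of_forall fun w => (measurable_phi2Integrand γ w).aestronglyMeasurable)
    (integrableOn_phi2Integrand hγ hz) (measurable_phi2IntegrandDeriv γ z).aestronglyMeasurable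
    ?_ ((integrableOn_rpow_div_one_add_sq hγ).const_mul _) ?_).2.differentiableAt
  · filter_upwards [ae_restrict_mem measurableSet_Ioi] with t ht w hw
    exact norm_phi2IntegrandDeriv_le hε (hball w hw).1 (hball w hw).2 ht
  · refine Eventually.of_forall fun t w hw => hasDerivAt_phi2Integrand γ ?_ t
    exact abs_pos.1 (hε.trans_le (hball w hw).1)

theorem Phi2_ofReal_mul (γ : ℝ) (ζ : ℂ) {c : ℝ} (hc : 0 < c) :
    Phi2 γ (c * ζ) = (c ^ γ : ℝ) * Phi2 γ ζ := by
  have hscale : ∀ t ∈ Ioi (0 : ℝ),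
      phi2Integrand γ (c * ζ) (c * t) = ((c ^ γ / c : ℝ) : ℂ) * phi2Integrand γ ζ t := by
    intro t ht
    have hc' : (c : ℂ) ≠ 0 := ofReal_ne_zero.2 hc.ne'
    rw [phi2Integrand, phi2Integrand, Real.mul_rpow hc.le (le_of_lt ht)]
    push_cast
    rw [show ((c : ℂ) * t - c * ζ) * (c * t + c * ζ) = c ^ 2 * ((t - ζ) * (t + ζ)) by ring]
    field_simp
  have hsub := integral_comp_mul_left_Ioi' (phi2Integrand γ (c * ζ)) 0 hc
  rw [mul_zero, setIntegral_congr_fun measurableSet_Ioi hscale, integral_const_mul] at hsub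
  change (∫ t in Ioi 0, phi2Integrand γ (c * ζ) t) = _
  rw [← hsub, real_smul, ← mul_assoc, ← ofReal_mul, mul_div_cancel₀ _ hc.ne']
  rfl

theorem Phi2_neg (γ : ℝ) (ζ : ℂ) : Phi2 γ (-ζ) = -Phi2 γ ζ := by
  rw [Phi2, Phi2, ← integral_neg]
  congr 1 with t
  ring

theorem im_Phi2_I_pos {γ : ℝ} (hγ : γ ∈ Ioo (-1 : ℝ) 1) : 0 < (Phi2 γ I).im := by
  have hint := integrableOn_phi2Integrand hγ (ζ := I) (by simp)
  have hpos : ∀ t ∈ Ioi (0 : ℝ), 0 < (phi2Integrand γ I t).im := by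
    intro t (ht : 0 < t)
    have hden : ((t : ℂ) - I) * ((t : ℂ) + I) = ((t ^ 2 + 1 : ℝ) : ℂ) := by
      push_cast; ring_nf; rw [I_sq]; ring
    have := Real.rpow_pos_of_pos ht γ
    rw [phi2Integrand, hden, div_ofReal_im]
    simp only [mul_im, mul_re, re_ofNat, I_re, mul_zero, im_ofNat, I_im, mul_one, sub_self,
      ofReal_im, add_zero, ofReal_re, zero_add]
    positivity
  have him := integral_im hint
  simp only [RCLike.im_to_complex] at him
  change 0 < (∫ t in Ioi (0 : ℝ), phi2Integrand γ I t).im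
  rw [← him]
  refine (setIntegral_pos_iff_support_of_nonneg_ae ?_ (Integrable.im hint)).2 ?_
  · filter_upwards [ae_restrict_mem measurableSet_Ioi] with t ht using (hpos t ht).le
  · exact lt_of_lt_of_le (by simp) (measure_mono fun t ht => ⟨(hpos t ht).ne', ht⟩)

theorem Phi2_eq_mul_cpow {γ : ℝ} (hγ : γ ∈ Ioo (-1 : ℝ) 1) {ζ : ℂ} (hζ : 0 < ζ.im) :
    Phi2 γ ζ = Phi2 γ I * I ^ (-(γ : ℂ)) * ζ ^ (γ : ℂ) := by
  have hζ0 : ζ ≠ 0 := fun h => by simp [h] at hζ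
  have hconst := (isOpen_lt continuous_const continuous_im).mul_cpow_neg_eq_of_homogeneous
    (convex_halfSpace_im_gt 0).isPreconnected
    (fun z hz => mem_slitPlane_iff.2 (Or.inr (ne_of_gt hz)))
    (fun z hz => (differentiableAt_Phi2 hγ (ne_of_gt hz)).differentiableWithinAt)
    (fun z _ c hc => Phi2_ofReal_mul γ z hc) hζ (show 0 < I.im by simp)
  rw [← hconst, mul_assoc, ← cpow_add _ _ hζ0, neg_add_cancel, cpow_zero, mul_one]

/-- For `γ ∈ (-1,1) \ {0}`: there is a nonzero constant `C` with
`Φ(ζ) = C·ζ^γ` (principal power) on the upper half-plane, `Φ` is odd on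
`ℂ \ ℝ`, and `Φ` is injective on `ℂ \ ℝ`. -/
theorem stmt_10 (γ : ℝ) (hγ : γ ∈ Set.Ioo (-1 : ℝ) 1) (hγ0 : γ ≠ 0) :
    (∃ C : ℂ, C ≠ 0 ∧ ∀ ζ : ℂ, 0 < ζ.im → Phi2 γ ζ = C * ζ ^ (γ : ℂ)) ∧
    (∀ ζ : ℂ, ζ.im ≠ 0 → Phi2 γ (-ζ) = -Phi2 γ ζ) ∧
    Set.InjOn (Phi2 γ) {ζ : ℂ | ζ.im ≠ 0} := by
  set C := Phi2 γ I * I ^ (-(γ : ℂ))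
  have hC : C ≠ 0 :=
    mul_ne_zero (fun h => (im_Phi2_I_pos hγ).ne' (by rw [h, zero_im])) (by simp [cpow_eq_zero_iff])
  have hγ1 : |γ| ≤ 1 := abs_le.2 ⟨hγ.1.le, hγ.2.le⟩
  refine ⟨⟨C, hC, fun ζ hζ => Phi2_eq_mul_cpow hγ hζ⟩, fun ζ _ => Phi2_neg γ ζ,
    injOn_im_ne_zero_of_odd (Phi2_neg γ) ?_ ?_⟩
  · intro z hz w hw h
    rw [Phi2_eq_mul_cpow hγ hz, Phi2_eq_mul_cpow hγ hw] at h
    exact injOn_cpow_ofReal_of_im_pos hγ1 hγ0 hz hw (mul_left_cancel₀ hC h)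
  · intro z w hz hw h
    rw [Phi2_eq_mul_cpow hγ hz, Phi2_eq_mul_cpow hγ hw, ← mul_neg] at h
    exact cpow_ofReal_ne_neg_cpow_ofReal hγ1 hγ0 hz hw (mul_left_cancel₀ hC h)
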